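/- arXiv:2002.01960 — 7 statements merged into one kernel-verified Lean document; each statement's English description precedes it below -/
import Mathlib

section
/- The parametrized least-fixed-point operator satisfies parametrized dinaturality: for Scott-continuous f : X × B → A and g : X × A → B between pointed dcpos, f ∘ ⟨id_X, (g ∘ ⟨π_X, f⟩)†⟩ = (f ∘ ⟨π₁, g⟩)†, where h† denotes the parametrized least fixed point of h. -/
open OmegaCompletePartialOrder

/-- The Kleene chain `n ↦ f^[n] ⊥` of a monotone map. -/
def kleeneChain {X : Type*} [OmegaCompletePartialOrder X] [OrderBot X]
    (f : X → X) (hf : Monotone f) : Chain X :=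
  ⟨fun n => f^[n] ⊥, monotone_nat_of_le_succ fun n => by
    induction n with
    | zero => exact bot_le
    | succ n ih =>
        rw [Function.iterate_succ_apply', Function.iterate_succ_apply']
        exact hf ih⟩

/-- Kleene least fixed point `fix f = ⨆ₙ fⁿ(⊥)` of a monotone endofunction of a
pointed dcpo (ω-complete pointed partial order). -/
def kfix {X : Type*} [OmegaCompletePartialOrder X] [OrderBot X]
    (f : X → X) (hf : Monotone f) : X :=
  ωSup (kleeneChain f hf)

/-- Parametrized least fixed point `f†(x) = fix (λ a. f (x, a))`. -/
def pfix {X A : Type*} [OmegaCompletePartialOrder X] [OrderBot X]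
    [OmegaCompletePartialOrder A] [OrderBot A]
    (f : X × A → A) (hf : Monotone f) : X → A :=
  fun x => kfix (fun a => f (x, a)) (fun _ _ h => hf ⟨le_rfl, h⟩)

lemma map_ωSup_pair {X B A : Type*}
    [OmegaCompletePartialOrder X] [OmegaCompletePartialOrder B]
    [OmegaCompletePartialOrder A]
    (f : X × B → A) (hf : ωScottContinuous f) (x : X) (c : Chain B) :
    f (x, ωSup c) = ωSup (c.map ⟨fun b => f (x, b), fun _ _ h => hf.monotone ⟨le_rfl, h⟩⟩) := by
  have hconst : (ωSup (⟨fun _ => x, monotone_const⟩ : Chain X)) = x :=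
    le_antisymm (ωSup_le _ _ fun _ => le_rfl) (le_ωSup (⟨fun _ => x, monotone_const⟩ : Chain X) 0)
  have hz := Prod.ωSup_zip (⟨fun _ => x, monotone_const⟩ : Chain X) c
  rw [hconst] at hz
  rw [← hz, hf.map_ωSup]
  congr 1

/-- parametrized dinaturality:
`f ∘ ⟨id_X, (g ∘ ⟨π_X, f⟩)†⟩ = (f ∘ ⟨π₁, g⟩)†`. -/
theorem pfix_dinatural {X A B : Type*}
    [OmegaCompletePartialOrder X] [OrderBot X]
    [OmegaCompletePartialOrder A] [OrderBot A]
    [OmegaCompletePartialOrder B] [OrderBot B]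
    (f : X × B → A) (g : X × A → B)
    (hf : ωScottContinuous f) (hg : ωScottContinuous g) :
    (fun x : X =>
        f (x, pfix (fun p : X × B => g (p.1, f p))
                (fun _ _ h => hg.monotone ⟨h.1, hf.monotone h⟩) x))
      = pfix (fun p : X × A => f (p.1, g p))
          (fun _ _ h => hf.monotone ⟨h.1, hg.monotone h⟩) := by
  funext x
  set F : B → A := fun b => f (x, b) with hF
  set G : A → B := fun a => g (x, a) with hG
  have hFmono : Monotone F := fun _ _ h => hf.monotone ⟨le_rfl, h⟩
  have hGmono : Monotone G := fun _ _ h => hg.monotone ⟨le_rfl, h⟩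
  have hGF : Monotone (G ∘ F) := hGmono.comp hFmono
  have hFG : Monotone (F ∘ G) := hFmono.comp hGmono
  show f (x, kfix (G ∘ F) _) = kfix (F ∘ G) _
  unfold kfix
  rw [map_ωSup_pair f hf x]
  -- key: F ((G∘F)^[n] ⊥) vs (F∘G)^[n] ⊥
  have key : ∀ n : ℕ, F ((G ∘ F)^[n] ⊥) = (F ∘ G)^[n] (F ⊥) := by
    intro n
    induction n with
    | zero => rfl
    | succ n ih =>
        rw [Function.iterate_succ_apply', Function.iterate_succ_apply']
        simp only [Function.comp_apply] at ih ⊢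
        rw [ih]
  apply le_antisymm
  · apply ωSup_le
    intro n
    apply le_ωSup_of_le (n + 1)
    show F ((G ∘ F)^[n] ⊥) ≤ (F ∘ G)^[n + 1] ⊥
    rw [key n, Function.iterate_succ_apply]
    exact hFG.iterate n (hFmono bot_le)
  · apply ωSup_le
    intro n
    apply le_ωSup_of_le n
    show (F ∘ G)^[n] ⊥ ≤ F ((G ∘ F)^[n] ⊥)
    rw [key n]
    exact hFG.iterate n bot_le
end

section
/- The parametrized least-fixed-point operator satisfies the diagonal property: for a Scott-continuous f : X × A × A → A between pointed dcpos, (f ∘ (id_X × Δ))† = (f†)†, where Δ : A → A × A is the diagonal and h† denotes the parametrized least fixed point in the last argument. -/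
open OmegaCompletePartialOrder

/-- The parametrized least fixed point is monotone in the parameter. -/
theorem pfix_monotone {X A : Type*}
    [OmegaCompletePartialOrder X] [OrderBot X]
    [OmegaCompletePartialOrder A] [OrderBot A]
    (f : X × A → A) (hf : Monotone f) : Monotone (pfix f hf) := by
  intro x y hxy
  refine ωSup_le _ _ fun n => le_trans ?_ (le_ωSup _ n)
  show (fun a => f (x, a))^[n] ⊥ ≤ (fun a => f (y, a))^[n] ⊥
  induction n with
  | zero => exact le_rfl
  | succ n ih =>
      rw [Function.iterate_succ_apply', Function.iterate_succ_apply']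
      exact hf ⟨hxy, ih⟩

section Helpers
variable {α β γ : Type*} [OmegaCompletePartialOrder α] [OmegaCompletePartialOrder β]
  [OmegaCompletePartialOrder γ]

lemma omegaScottContinuous.prodMk {g : γ → α} {h : γ → β}
    (hg : ωScottContinuous g) (hh : ωScottContinuous h) :
    ωScottContinuous (fun z => (g z, h z)) := by
  have mono : Monotone (fun z => (g z, h z)) :=
    fun a b hab => ⟨hg.monotone hab, hh.monotone hab⟩
  refine ωScottContinuous.of_monotone_map_ωSup ⟨mono, fun c => ?_⟩
  have h1 : ωSup (c.map ⟨fun z => (g z, h z), mono⟩)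
      = (ωSup ((c.map ⟨fun z => (g z, h z), mono⟩).map OrderHom.fst),
         ωSup ((c.map ⟨fun z => (g z, h z), mono⟩).map OrderHom.snd)) := rfl
  rw [h1, Chain.map_comp, Chain.map_comp]
  have e1 : (OrderHom.fst.comp ⟨fun z => (g z, h z), mono⟩) = ⟨g, hg.monotone⟩ := rfl
  have e2 : (OrderHom.snd.comp ⟨fun z => (g z, h z), mono⟩) = ⟨h, hh.monotone⟩ := rfl
  rw [e1, e2, ← hg.map_ωSup, ← hh.map_ωSup]

section Kfix
variable [OrderBot α]

lemma kfix_le {f : α → α} (hf : Monotone f) {a : α} (h : f a ≤ a) : kfix f hf ≤ a := by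
  refine ωSup_le _ _ fun n => ?_
  show f^[n] ⊥ ≤ a
  induction n with
  | zero => exact bot_le
  | succ n ih => rw [Function.iterate_succ_apply']; exact le_trans (hf ih) h

lemma kfix_fixed {f : α → α} (hf : ωScottContinuous f) (hm : Monotone f) :
    f (kfix f hm) = kfix f hm := by
  rw [kfix, hf.map_ωSup]
  apply le_antisymm
  · refine ωSup_le _ _ fun n => ?_
    calc f (f^[n] ⊥) = f^[n+1] ⊥ := (Function.iterate_succ_apply' f n ⊥).symm
      _ ≤ _ := le_ωSup (kleeneChain f hm) (n+1)
  · refine ωSup_le _ _ fun n => le_trans ?_ (le_ωSup _ n)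
    show f^[n] ⊥ ≤ f (f^[n] ⊥)
    induction n with
    | zero => exact bot_le
    | succ n ih =>
        rw [Function.iterate_succ_apply']
        exact hm ih

end Kfix
end Helpers


/-- the diagonal property of the parametrized least-fixed-point
operator: `(f ∘ (id_X × Δ))† = (f†)†`. -/
theorem pfix_diagonal {X A : Type*}
    [OmegaCompletePartialOrder X] [OrderBot X]
    [OmegaCompletePartialOrder A] [OrderBot A]
    (f : X × (A × A) → A) (hf : ωScottContinuous f) :
    pfix (fun p : X × A => f (p.1, (p.2, p.2)))
        (fun _ _ h => hf.monotone ⟨h.1, h.2, h.2⟩)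
      = pfix
          (pfix (fun p : (X × A) × A => f (p.1.1, (p.1.2, p.2)))
            (fun _ _ h => hf.monotone ⟨Prod.mk_le_mk.mp h.1 |>.1, Prod.mk_le_mk.mp h.1 |>.2, h.2⟩))
          (pfix_monotone _ _) := by
  funext x
  have hdiag : ωScottContinuous (fun a : A => f (x, (a, a))) :=
    hf.comp (omegaScottContinuous.prodMk ωScottContinuous.const
      (omegaScottContinuous.prodMk ωScottContinuous.id ωScottContinuous.id))
  have hinner : ∀ b : A, ωScottContinuous (fun a : A => f (x, (b, a))) := fun b =>
    hf.comp (omegaScottContinuous.prodMk ωScottContinuous.const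
      (omegaScottContinuous.prodMk ωScottContinuous.const ωScottContinuous.id))
  have gm : Monotone (fun a : A => f (x, (a, a))) := fun _ _ h => hf.monotone ⟨le_rfl, h, h⟩
  have hm : Monotone (fun p : (X × A) × A => f (p.1.1, (p.1.2, p.2))) := fun _ _ h =>
    hf.monotone ⟨(Prod.mk_le_mk.mp h.1).1, (Prod.mk_le_mk.mp h.1).2, h.2⟩
  -- D is the inner parametrized fixed point
  have dxm : Monotone (fun b : A =>
      pfix (fun p : (X × A) × A => f (p.1.1, (p.1.2, p.2))) hm (x, b)) := fun _ _ h =>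
    pfix_monotone _ hm ⟨le_rfl, h⟩
  set D : A → A := fun b => pfix (fun p : (X × A) × A => f (p.1.1, (p.1.2, p.2))) hm (x, b)
    with hDdef
  show kfix (fun a : A => f (x, (a, a))) gm = kfix D dxm
  have hDfix : ∀ b : A, f (x, (b, D b)) = D b := fun b =>
    kfix_fixed (hinner b) (fun _ _ h => hm (Prod.mk_le_mk.mpr ⟨(le_refl ((x, b) : X × A)), h⟩))
  have hDle : ∀ b c : A, f (x, (b, c)) ≤ c → D b ≤ c := fun b c h => kfix_le _ h
  have hLfix : f (x, (kfix (fun a : A => f (x, (a, a))) gm,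
      kfix (fun a : A => f (x, (a, a))) gm)) = kfix (fun a : A => f (x, (a, a))) gm :=
    kfix_fixed hdiag gm
  apply le_antisymm
  · -- L ≤ R
    set R : A := kfix D dxm with hRdef
    have fact : ∀ n, f (x, (D^[n] ⊥, D^[n] ⊥)) ≤ R := by
      intro n
      have h1 : f (x, (D^[n] ⊥, D^[n+1] ⊥)) = D^[n+1] ⊥ := by
        rw [Function.iterate_succ_apply']
        exact hDfix _
      have h2 : (D^[n] ⊥ : A) ≤ D^[n+1] ⊥ := (kleeneChain D dxm).monotone (Nat.le_succ n)
      calc f (x, (D^[n] ⊥, D^[n] ⊥)) ≤ f (x, (D^[n] ⊥, D^[n+1] ⊥)) :=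
            hf.monotone ⟨le_rfl, le_rfl, h2⟩
        _ = D^[n+1] ⊥ := h1
        _ ≤ R := le_ωSup (kleeneChain D dxm) (n+1)
    have key : f (x, (R, R)) ≤ R := by
      have : f (x, (R, R)) = ωSup ((kleeneChain D dxm).map ⟨fun a => f (x, (a, a)), gm⟩) :=
        hdiag.map_ωSup _
      rw [this]
      exact ωSup_le _ _ fun n => fact n
    exact kfix_le _ key
  · exact kfix_le _ (hDle _ _ (le_of_eq hLfix))
end

section
/- Define the trace of a Scott-continuous f : A × X → B × X between pointed dcpos by Tr(f)(a) = π_B(f(a, μ(a))), where μ(a) = fix(λ x. π_X(f(a, x))). Then Tr(f) equals π_B ∘ (f ∘ π_{A×X})†, i.e., f ∘ ⟨id_A, μ⟩ = (f ∘ π_{A×X})† where (f ∘ π_{A×X})† : A → B × X is the parametrized least fixed point of the map (B × X) × A-indexed composite f ∘ π_{A×X} : B × X × A → B × X. -/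
open OmegaCompletePartialOrder

lemma kfix_fixed_s7 {X : Type*} [OmegaCompletePartialOrder X] [OrderBot X]
    (f : X → X) (hf : ωScottContinuous f) :
    f (kfix f hf.monotone) = kfix f hf.monotone := by
  unfold kfix
  rw [hf.map_ωSup]
  apply le_antisymm
  · apply ωSup_le
    intro n
    have : (Chain.map (kleeneChain f hf.monotone) ⟨f, hf.monotone⟩) n
        = (kleeneChain f hf.monotone) (n+1) := by
      show f (f^[n] ⊥) = f^[n+1] ⊥
      rw [Function.iterate_succ_apply']
    rw [this]
    exact le_ωSup _ _
  · apply ωSup_le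
    intro n
    cases n with
    | zero => exact bot_le
    | succ n =>
        have : (kleeneChain f hf.monotone) (n+1)
            = (Chain.map (kleeneChain f hf.monotone) ⟨f, hf.monotone⟩) n := by
          show f^[n+1] ⊥ = f (f^[n] ⊥)
          rw [Function.iterate_succ_apply']
        rw [this]
        exact le_ωSup _ _

/-- Hasegawa–Hyland relation between the trace and the parametrized
fixed point: with `μ(a) = fix (λ x. π_X (f (a, x)))`,
`f ∘ ⟨id_A, μ⟩ = (f ∘ π_{A×X})†`. -/
theorem trace_eq_pfix {A B X : Type*}
    [OmegaCompletePartialOrder A] [OrderBot A]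
    [OmegaCompletePartialOrder B] [OrderBot B]
    [OmegaCompletePartialOrder X] [OrderBot X]
    (f : A × X → B × X) (hf : ωScottContinuous f) :
    (fun a : A =>
        f (a, kfix (fun x => (f (a, x)).2) (fun _ _ h => (hf.monotone (Prod.mk_le_mk.mpr ⟨le_rfl, h⟩)).2)))
      = pfix (fun p : A × (B × X) => f (p.1, p.2.2))
          (fun _ _ h => hf.monotone ⟨h.1, h.2.2⟩) := by
  funext a
  set g : B × X → B × X := fun p => f (a, p.2) with hg
  have h1 : ωScottContinuous (fun p : B × X => ((a, p.2) : A × X)) := by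
    apply ωScottContinuous.of_monotone_map_ωSup
    refine ⟨fun _ _ hle => Prod.mk_le_mk.mpr ⟨le_rfl, hle.2⟩, fun c => ?_⟩
    set m : B × X →o A × X := ⟨fun p => ((a, p.2) : A × X),
      fun _ _ hle => Prod.mk_le_mk.mpr ⟨le_rfl, hle.2⟩⟩ with hm
    show ((a, (ωSup c).2) : A × X) = ωSup (c.map m)
    have h2 : ωSup (c.map m)
        = (ωSup ((c.map m).map OrderHom.fst), ωSup ((c.map m).map OrderHom.snd)) := rfl
    rw [h2]
    refine Prod.ext ?_ ?_
    · show a = ωSup ((c.map m).map OrderHom.fst)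
      have hconst : ∀ n, ((c.map m).map OrderHom.fst) n = a := fun n => rfl
      refine le_antisymm ?_ (ωSup_le _ a fun n => le_of_eq (hconst n))
      calc a = ((c.map m).map OrderHom.fst) 0 := rfl
        _ ≤ ωSup ((c.map m).map OrderHom.fst) := le_ωSup _ 0
    · show (ωSup c).2 = ωSup ((c.map m).map OrderHom.snd)
      rfl
  have hgc : ωScottContinuous g := hf.comp h1
  set h : X → X := fun x => (f (a, x)).2 with hh
  have hhm : Monotone h := fun _ _ hle => (hf.monotone (Prod.mk_le_mk.mpr ⟨le_rfl, hle⟩)).2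
  -- second components of iterates of g are iterates of h
  have hiter : ∀ n, (g^[n] ⊥).2 = h^[n] ⊥ := by
    intro n
    induction n with
    | zero => rfl
    | succ n ih =>
        rw [Function.iterate_succ_apply', Function.iterate_succ_apply', ← ih]
  have hsnd : (kfix g hgc.monotone).2 = kfix h hhm := by
    unfold kfix
    show ωSup ((kleeneChain g hgc.monotone).map OrderHom.snd) = _
    congr 1
    apply Chain.ext
    funext n
    exact hiter n
  have key : kfix h hhm
      = kfix (fun x => (f (a, x)).2) (fun _ _ hle => (hf.monotone (Prod.mk_le_mk.mpr ⟨le_rfl, hle⟩)).2) := rfl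
  show f (a, kfix h hhm) = kfix g hgc.monotone
  rw [← hsnd]
  exact kfix_fixed_s7 g hgc
end

section
/- Knaster–Tarski formulation of the trace: for Scott-continuous f : A × X → B × X between pointed dcpos where B × X is a complete lattice (or all needed infima exist), Tr(f)(a) = π_B(⨅{ (b, x) ∈ B × X | f(a, x) ⊑ (b, x) }), where Tr(f)(a) = π_B(f(a, fix(λ x. π_X(f(a, x))))). -/
open OmegaCompletePartialOrder

/-- Knaster–Tarski formulation of the trace. For Scott-continuous
`f : A × X → B × X` (with `B`, `X` complete lattices so the infimum exists),
`π_B (f (a, fix (λ x. π_X (f (a, x))))) = π_B (⨅ { (b, x) | f (a, x) ⊑ (b, x) })`. -/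
theorem trace_knaster_tarski {A B X : Type*}
    [OmegaCompletePartialOrder A] [OrderBot A]
    [CompleteLattice B] [CompleteLattice X]
    (f : A × X → B × X) (hf : OmegaCompletePartialOrder.ωScottContinuous f) :
    ∀ a : A,
      (f (a, ⨆ n, (fun x => (f (a, x)).2)^[n] ⊥)).1
        = (sInf {q : B × X | f (a, q.2) ≤ q}).1 := by
  intro a
  set gfun : X → X := fun x => (f (a, x)).2 with hg
  have hmono : Monotone gfun := fun x y hxy =>
    (hf.monotone (Prod.mk_le_mk.2 ⟨le_rfl, hxy⟩)).2
  set g : X →o X := ⟨gfun, hmono⟩ with hgo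
  -- continuity of g
  have hgc : ωScottContinuous gfun := by
    refine ωScottContinuous.of_monotone_map_ωSup ⟨hmono, fun c => ?_⟩
    -- chain (a, c n)
    have hca : Monotone (fun n => ((a, c n) : A × X)) := fun m n h =>
      Prod.mk_le_mk.2 ⟨le_rfl, c.monotone h⟩
    have h1 : ωSup (⟨fun n => ((a, c n) : A × X), hca⟩ : Chain (A × X)) = (a, ωSup c) := by
      apply le_antisymm
      · exact ωSup_le _ _ fun i => Prod.mk_le_mk.2 ⟨le_rfl, le_ωSup c i⟩
      · constructor
        · exact (le_ωSup (α := A × X) ⟨fun n => ((a, c n) : A × X), hca⟩ 0).1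
        · exact ωSup_le _ _ fun i => (le_ωSup (α := A × X) ⟨fun n => ((a, c n) : A × X), hca⟩ i).2
    have h2 := hf.map_ωSup (⟨fun n => ((a, c n) : A × X), hca⟩ : Chain (A × X))
    rw [h1] at h2
    have := congrArg Prod.snd h2
    exact this
  have hlfp : g.lfp = ⨆ n, gfun^[n] ⊥ := fixedPoints.lfp_eq_sSup_iterate g hgc
  set μ : X := ⨆ n, gfun^[n] ⊥ with hμ
  have hfix : (f (a, μ)).2 = μ := by
    have := g.map_lfp
    rw [hlfp] at this
    exact this
  -- f (a, μ) is in the set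
  have hmem : f (a, μ) ∈ {q : B × X | f (a, q.2) ≤ q} := by
    show f (a, (f (a, μ)).2) ≤ f (a, μ)
    rw [hfix]
  -- f (a, μ) is a lower bound
  have hlb : ∀ q ∈ {q : B × X | f (a, q.2) ≤ q}, f (a, μ) ≤ q := by
    intro q hq
    have hμq : μ ≤ q.2 := by
      rw [← hlfp]
      exact g.lfp_le hq.2
    exact le_trans (hf.monotone (Prod.mk_le_mk.2 ⟨le_rfl, hμq⟩)) hq
  have : f (a, μ) = sInf {q : B × X | f (a, q.2) ≤ q} :=
    le_antisymm (le_sInf hlb) (sInf_le hmem)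
  exact congrArg Prod.fst this
end

section
/- Sliding/section-retraction cancellation for the trace: let s : Y → X and r : X → Y be Scott-continuous with r ∘ s = id_Y, and let f : A × Y → B × Y be Scott-continuous between pointed dcpos. Then Tr_X((id_B × s) ∘ f ∘ (id_A × r)) = Tr_Y(f), where Tr_Z(g)(a) = π_B(g(a, fix(λ z. π_Z(g(a, z))))). -/
open OmegaCompletePartialOrder

/-- The trace of a monotone `g : A × Z → B × Z`, fixing the `Z`-component via the
Kleene least fixed point: `Tr(g)(a) = π_B (g (a, fix (λ z. π_Z (g (a, z)))))`. -/
def kTrace {A B Z : Type*} [Preorder A] [Preorder B]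
    [OmegaCompletePartialOrder Z] [OrderBot Z]
    (g : A × Z → B × Z) (hg : Monotone g) (a : A) : B :=
  (g (a, kfix (fun z => (g (a, z)).2)
        (fun _ _ h => (hg (Prod.mk_le_mk.mpr ⟨le_rfl, h⟩)).2))).1

/-- section-retraction cancellation (sliding) for the trace:
for a continuous section-retraction pair `r ∘ s = id_Y`,
`Tr_X ((id_B × s) ∘ f ∘ (id_A × r)) = Tr_Y (f)`. -/
theorem kTrace_section_retraction {A B X Y : Type*}
    [OmegaCompletePartialOrder A] [OrderBot A]
    [OmegaCompletePartialOrder B] [OrderBot B]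
    [OmegaCompletePartialOrder X] [OrderBot X]
    [OmegaCompletePartialOrder Y] [OrderBot Y]
    (s : Y → X) (r : X → Y) (f : A × Y → B × Y)
    (hs : ωScottContinuous s) (hr : ωScottContinuous r)
    (hf : ωScottContinuous f) (hrs : r ∘ s = id) :
    kTrace (fun p : A × X => ((f (p.1, r p.2)).1, s (f (p.1, r p.2)).2))
        (fun _ _ h =>
          Prod.mk_le_mk.mpr
            ⟨(hf.monotone ⟨h.1, hr.monotone h.2⟩).1,
              hs.monotone (hf.monotone ⟨h.1, hr.monotone h.2⟩).2⟩)
      = kTrace f hf.monotone := by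
  funext a
  have hrs' : ∀ y, r (s y) = y := fun y => congrFun hrs y
  set h : Y → Y := fun y => (f (a, y)).2 with hhdef
  have hmono : Monotone h := fun y1 y2 hy => (hf.monotone (show (a,y1) ≤ (a,y2) from ⟨le_rfl, hy⟩)).2
  set gs : X → X := fun x => s (f (a, r x)).2 with hgsdef
  have hgsm : Monotone gs := fun x1 x2 hx =>
    hs.monotone (hf.monotone (show (a, r x1) ≤ (a, r x2) from ⟨le_rfl, hr.monotone hx⟩)).2
  have key : ∀ n, r (gs^[n] ⊥) = h^[n] (r ⊥) := by
    intro n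
    induction n with
    | zero => rfl
    | succ n ih =>
        rw [Function.iterate_succ_apply', Function.iterate_succ_apply',
          show gs (gs^[n] ⊥) = s (h (r (gs^[n] ⊥))) from rfl, hrs', ih]
  have main : r (kfix gs hgsm) = kfix h hmono := by
    rw [kfix, hr.map_ωSup]
    have hrb : r ⊥ ≤ h ⊥ := by
      calc r ⊥ ≤ r (s (h ⊥)) := hr.monotone bot_le
        _ = h ⊥ := hrs' _
    refine le_antisymm (ωSup_le _ _ fun n => ?_) (ωSup_le _ _ fun n => ?_)
    · show r (gs^[n] ⊥) ≤ _
      rw [key]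
      refine le_trans (hmono.iterate n hrb) ?_
      rw [← Function.iterate_succ_apply]
      exact le_ωSup (kleeneChain h hmono) (n+1)
    · show h^[n] ⊥ ≤ _
      refine le_trans (hmono.iterate n (bot_le : (⊥:Y) ≤ r ⊥)) ?_
      rw [← key]
      exact le_ωSup ((kleeneChain gs hgsm).map ⟨r, hr.monotone⟩) n
  show (f (a, r (kfix gs hgsm))).1 = (f (a, kfix h hmono)).1
  rw [main]
end

section
/- Strictness elimination under the trace: let f : A × X → C × Y and g : B × Y → D × X be Scott-continuous between pointed dcpos (with all relevant products complete lattices so infima of pre-fixed points exist). Let strict_X(f) denote the function equal to f except that strict_X(f)(a, ⊥_X) = ⊥. If π_X ∘ g is NOT strict (i.e., π_X(g(⊥_B, ⊥_Y)) ≠ ⊥_X), then Tr_{X×Y}(strict_X(f) × g) = Tr_{X×Y}(f × g) as functions A × B → C × D. -/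
open scoped Classical

/-- The Knaster–Tarski trace of `h : I × F → O × F`, fixing the feedback
component `F`: `Tr(h)(i) = π_O (⨅ { q | h (i, π_F q) ⊑ q })`. -/
noncomputable def ktTrace {I O F : Type*} [CompleteLattice O] [CompleteLattice F]
    (h : I × F → O × F) (i : I) : O :=
  (sInf {q : O × F | h (i, q.2) ≤ q}).1

/-- `strict_X(f)`: the function equal to `f` except that it sends a bottom
`X`-input to bottom. -/
noncomputable def strictifyX {A X C : Type*} [Bot X] [Bot C]
    (f : A × X → C) : A × X → C :=
  fun p => if p.2 = ⊥ then ⊥ else f p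

/-- strictness elimination under the trace. For continuous
`f : A × X → C × Y` and `g : B × Y → D × X`, if `π_X ∘ g` is not strict, then
tracing out `X × Y` of `strict_X(f) × g` equals tracing out `X × Y` of `f × g`. -/
theorem ktTrace_strictify {A B C D X Y : Type*}
    [CompleteLattice A] [CompleteLattice B] [CompleteLattice C]
    [CompleteLattice D] [CompleteLattice X] [CompleteLattice Y]
    (f : A × X → C × Y) (g : B × Y → D × X)
    (hf : OmegaCompletePartialOrder.ωScottContinuous f)
    (hg : OmegaCompletePartialOrder.ωScottContinuous g)
    (hns : (g (⊥, ⊥)).2 ≠ ⊥) :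
    ktTrace (fun p : (A × B) × (X × Y) =>
        (((strictifyX f (p.1.1, p.2.1)).1, (g (p.1.2, p.2.2)).1),
          ((g (p.1.2, p.2.2)).2, (strictifyX f (p.1.1, p.2.1)).2)))
      = ktTrace (fun p : (A × B) × (X × Y) =>
          (((f (p.1.1, p.2.1)).1, (g (p.1.2, p.2.2)).1),
            ((g (p.1.2, p.2.2)).2, (f (p.1.1, p.2.1)).2))) := by
  funext i
  unfold ktTrace
  congr 2
  ext q
  -- key fact: any pre-fixed point has nonbot X-component
  have key : ∀ (hx : (g (i.2, q.2.2)).2 ≤ q.2.1), q.2.1 ≠ ⊥ := by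
    intro hx hb
    apply hns
    have hmono := hg.monotone
    have : g (⊥, ⊥) ≤ g (i.2, q.2.2) := hmono (by constructor <;> simp)
    have h2 : (g (⊥, ⊥)).2 ≤ q.2.1 := le_trans this.2 hx
    rw [hb] at h2
    exact le_bot_iff.mp h2
  constructor
  · rintro ⟨⟨h1, h2⟩, h3, h4⟩
    have hne := key h3
    simp only [strictifyX, if_neg hne] at h1 h4
    exact ⟨⟨h1, h2⟩, h3, h4⟩
  · rintro ⟨⟨h1, h2⟩, h3, h4⟩
    have hne := key h3
    refine ⟨⟨?_, h2⟩, h3, ?_⟩ <;> simp only [strictifyX, if_neg hne] <;> assumption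
end

section
/- Trace associativity for chained feedback: let f₁ : A₁ × X₁ → B₁ × Y₁, f₂ : A₂ × Y₁ × X₂ → B₂ × X₁ × Y₂, f₃ : A₃ × Y₂ → B₃ × X₂ be Scott-continuous between complete lattices. Then tracing out all four feedback channels X₁, Y₁, X₂, Y₂ of the product f₁ × f₂ × f₃ at once equals first tracing X₂, Y₂ out of f₂ × f₃ and then tracing X₁, Y₁, and also equals first tracing X₁, Y₁ out of f₁ × f₂ and then tracing X₂, Y₂. -/
section KTAux
variable {α : Type*} [CompleteLattice α]

theorem lfpAux_le {g : α → α} {s : α} (hs : g s ≤ s) : sInf {x | g x ≤ x} ≤ s := sInf_le hs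

theorem lfpAux_prefix {g : α → α} (hg : Monotone g) :
    g (sInf {x | g x ≤ x}) ≤ sInf {x | g x ≤ x} :=
  le_sInf fun t ht => le_trans (hg (sInf_le ht)) ht

theorem lfpAux_unique {g : α → α} {c : α} (hc : g c ≤ c) (hl : ∀ s, g s ≤ s → c ≤ s) :
    sInf {x | g x ≤ x} = c :=
  le_antisymm (sInf_le hc) (le_sInf hl)

end KTAux

theorem leProd {α β : Type*} [Preorder α] [Preorder β] {p q : α × β}
    (h1 : p.1 ≤ q.1) (h2 : p.2 ≤ q.2) : p ≤ q := Prod.le_def.mpr ⟨h1, h2⟩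

theorem leMk {α β : Type*} [Preorder α] [Preorder β] {a a' : α} {b b' : β}
    (h1 : a ≤ a') (h2 : b ≤ b') : (a, b) ≤ (a', b') := Prod.mk_le_mk.mpr ⟨h1, h2⟩

theorem leFst' {α β : Type*} [Preorder α] [Preorder β] {p q : α × β} (h : p ≤ q) :
    p.1 ≤ q.1 := (Prod.le_def.mp h).1

theorem leSnd' {α β : Type*} [Preorder α] [Preorder β] {p q : α × β} (h : p ≤ q) :
    p.2 ≤ q.2 := (Prod.le_def.mp h).2

theorem ktTrace_eq' {I O F : Type*} [CompleteLattice O] [CompleteLattice F]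
    (h : I × F → O × F) (i : I) (hm : Monotone fun f : F => h (i, f)) :
    ktTrace h i = (h (i, sInf {s : F | (h (i, s)).2 ≤ s})).1 := by
  have hpre : (h (i, sInf {s : F | (h (i, s)).2 ≤ s})).2 ≤ sInf {s : F | (h (i, s)).2 ≤ s} :=
    lfpAux_prefix (g := fun s : F => (h (i, s)).2) (fun a b hab => leSnd' (hm hab))
  have key : sInf {q : O × F | h (i, q.2) ≤ q}
      = ((h (i, sInf {s : F | (h (i, s)).2 ≤ s})).1, sInf {s : F | (h (i, s)).2 ≤ s}) := by
    refine le_antisymm (sInf_le ?_) (le_sInf fun q hq => ?_)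
    · exact leProd le_rfl hpre
    · have h2 : sInf {s : F | (h (i, s)).2 ≤ s} ≤ q.2 := sInf_le (leSnd' hq)
      have hh : h (i, sInf {s : F | (h (i, s)).2 ≤ s}) ≤ h (i, q.2) := hm h2
      exact leProd ((leFst' hh).trans (leFst' hq)) h2
  simp only [ktTrace, key]

section Assoc

variable {A₁ B₁ A₂ B₂ A₃ B₃ X₁ Y₁ X₂ Y₂ : Type*}
    [CompleteLattice A₁] [CompleteLattice B₁] [CompleteLattice A₂]
    [CompleteLattice B₂] [CompleteLattice A₃] [CompleteLattice B₃]
    [CompleteLattice X₁] [CompleteLattice Y₁] [CompleteLattice X₂]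
    [CompleteLattice Y₂]
    (f₁ : A₁ × X₁ → B₁ × Y₁) (f₂ : A₂ × (Y₁ × X₂) → B₂ × (X₁ × Y₂))
    (f₃ : A₃ × Y₂ → B₃ × X₂)

/-- The product `f₁ × f₂ × f₃` with all four feedback channels exposed. -/
def prodAll : (A₁ × A₂ × A₃) × (X₁ × Y₁ × X₂ × Y₂) →
    (B₁ × B₂ × B₃) × (X₁ × Y₁ × X₂ × Y₂) := fun p =>
  let r₁ := f₁ (p.1.1, p.2.1)
  let r₂ := f₂ (p.1.2.1, (p.2.2.1, p.2.2.2.1))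
  let r₃ := f₃ (p.1.2.2, p.2.2.2.2)
  ((r₁.1, r₂.1, r₃.1), (r₂.2.1, r₁.2, r₃.2, r₂.2.2))

/-- The product `f₂ × f₃` with feedback channels `X₂, Y₂` exposed. -/
def prod23 : ((A₂ × A₃) × Y₁) × (X₂ × Y₂) → ((B₂ × B₃) × X₁) × (X₂ × Y₂) := fun q =>
  let r₂ := f₂ (q.1.1.1, (q.1.2, q.2.1))
  let r₃ := f₃ (q.1.1.2, q.2.2)
  (((r₂.1, r₃.1), r₂.2.1), (r₃.2, r₂.2.2))

/-- `f₁` composed (in parallel) with the `X₂, Y₂`-trace of `f₂ × f₃`, with feedback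
channels `X₁, Y₁` exposed. -/
noncomputable def prod1Tr23 : (A₁ × A₂ × A₃) × (X₁ × Y₁) →
    (B₁ × B₂ × B₃) × (X₁ × Y₁) := fun p =>
  let r₁ := f₁ (p.1.1, p.2.1)
  let t := ktTrace (prod23 f₂ f₃) ((p.1.2.1, p.1.2.2), p.2.2)
  ((r₁.1, t.1.1, t.1.2), (t.2, r₁.2))

/-- The product `f₁ × f₂` with feedback channels `X₁, Y₁` exposed. -/
def prod12 : ((A₁ × A₂) × X₂) × (X₁ × Y₁) → ((B₁ × B₂) × Y₂) × (X₁ × Y₁) := fun q =>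
  let r₁ := f₁ (q.1.1.1, q.2.1)
  let r₂ := f₂ (q.1.1.2, (q.2.2, q.1.2))
  (((r₁.1, r₂.1), r₂.2.2), (r₂.2.1, r₁.2))

/-- The `X₁, Y₁`-trace of `f₁ × f₂` composed (in parallel) with `f₃`, with feedback
channels `X₂, Y₂` exposed. -/
noncomputable def prodTr12Then3 : (A₁ × A₂ × A₃) × (X₂ × Y₂) →
    (B₁ × B₂ × B₃) × (X₂ × Y₂) := fun p =>
  let t := ktTrace (prod12 f₁ f₂) ((p.1.1, p.1.2.1), p.2.1)
  let r₃ := f₃ (p.1.2.2, p.2.2)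
  ((t.1.1, t.1.2, r₃.1), (r₃.2, t.2))


/-- Feedback least fixed point of `prod23 f₂ f₃` at a given input. -/
noncomputable def mA (a₂ : A₂) (a₃ : A₃) (y₁ : Y₁) : X₂ × Y₂ :=
  sInf {v : X₂ × Y₂ | ((f₃ (a₃, v.2)).2, (f₂ (a₂, (y₁, v.1))).2.2) ≤ v}

/-- Feedback least fixed point of `prod1Tr23 f₁ f₂ f₃` at a given input. -/
noncomputable def muA (a₁ : A₁) (a₂ : A₂) (a₃ : A₃) : X₁ × Y₁ :=
  sInf {u : X₁ × Y₁ |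
    ((f₂ (a₂, (u.2, (mA f₂ f₃ a₂ a₃ u.2).1))).2.1, (f₁ (a₁, u.1)).2) ≤ u}

/-- Feedback least fixed point of `prod12 f₁ f₂` at a given input. -/
noncomputable def mB (a₁ : A₁) (a₂ : A₂) (x₂ : X₂) : X₁ × Y₁ :=
  sInf {u : X₁ × Y₁ | ((f₂ (a₂, (u.2, x₂))).2.1, (f₁ (a₁, u.1)).2) ≤ u}

/-- Feedback least fixed point of `prodTr12Then3 f₁ f₂ f₃` at a given input. -/
noncomputable def muB (a₁ : A₁) (a₂ : A₂) (a₃ : A₃) : X₂ × Y₂ :=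
  sInf {w : X₂ × Y₂ |
    ((f₃ (a₃, w.2)).2, (f₂ (a₂, ((mB f₁ f₂ a₁ a₂ w.1).2, w.1))).2.2) ≤ w}

/-- trace associativity for chained feedback: tracing all four
feedback channels `X₁, Y₁, X₂, Y₂` of `f₁ × f₂ × f₃` at once equals first tracing
`X₂, Y₂` out of `f₂ × f₃` and then `X₁, Y₁`, and also equals first tracing
`X₁, Y₁` out of `f₁ × f₂` and then `X₂, Y₂`. -/
theorem ktTrace_assoc
    (hf₁ : OmegaCompletePartialOrder.ωScottContinuous f₁)
    (hf₂ : OmegaCompletePartialOrder.ωScottContinuous f₂)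
    (hf₃ : OmegaCompletePartialOrder.ωScottContinuous f₃) :
    ktTrace (prodAll f₁ f₂ f₃) = ktTrace (prod1Tr23 f₁ f₂ f₃) ∧
      ktTrace (prodAll f₁ f₂ f₃) = ktTrace (prodTr12Then3 f₁ f₂ f₃) := by
  have m1 := hf₁.monotone
  have m2 := hf₂.monotone
  have m3 := hf₃.monotone
  constructor
  · -- first conjunct
    funext i
    obtain ⟨a₁, a₂, a₃⟩ := i
    have M1 : ∀ {x x' : X₁}, x ≤ x' → f₁ (a₁, x) ≤ f₁ (a₁, x') :=
      fun h => m1 (leMk le_rfl h)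
    have M2 : ∀ {y y' : Y₁} {x x' : X₂}, y ≤ y' → x ≤ x' →
        f₂ (a₂, (y, x)) ≤ f₂ (a₂, (y', x')) :=
      fun hy hx => m2 (leMk le_rfl (leMk hy hx))
    have M3 : ∀ {y y' : Y₂}, y ≤ y' → f₃ (a₃, y) ≤ f₃ (a₃, y') :=
      fun h => m3 (leMk le_rfl h)
    -- the inner fixed point and its properties
    have hψmono : ∀ y₁ : Y₁, Monotone (fun v : X₂ × Y₂ =>
        ((f₃ (a₃, v.2)).2, (f₂ (a₂, (y₁, v.1))).2.2)) := by
      intro y₁ v v' h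
      have e3 : f₃ (a₃, v.2) ≤ f₃ (a₃, v'.2) := M3 (leSnd' h)
      have e2 : f₂ (a₂, (y₁, v.1)) ≤ f₂ (a₂, (y₁, v'.1)) := M2 le_rfl (leFst' h)
      exact leMk (leSnd' e3) (leSnd' (leSnd' e2))
    have hmpre : ∀ y₁ : Y₁,
        ((f₃ (a₃, (mA f₂ f₃ a₂ a₃ y₁).2)).2,
          (f₂ (a₂, (y₁, (mA f₂ f₃ a₂ a₃ y₁).1))).2.2) ≤ mA f₂ f₃ a₂ a₃ y₁ :=
      fun y₁ => lfpAux_prefix (hψmono y₁)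
    have hmmono : ∀ y y' : Y₁, y ≤ y' → mA f₂ f₃ a₂ a₃ y ≤ mA f₂ f₃ a₂ a₃ y' := by
      intro y y' h
      unfold mA
      refine le_sInf fun v hv => sInf_le ?_
      have e2 : f₂ (a₂, (y, v.1)) ≤ f₂ (a₂, (y', v.1)) := M2 h le_rfl
      have step : ((f₃ (a₃, v.2)).2, (f₂ (a₂, (y, v.1))).2.2)
          ≤ ((f₃ (a₃, v.2)).2, (f₂ (a₂, (y', v.1))).2.2) :=
        leMk le_rfl (leSnd' (leSnd' e2))
      exact le_trans step hv
    -- trace formula for prod23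
    have hmono23 : ∀ y₁ : Y₁, Monotone fun v : X₂ × Y₂ =>
        prod23 f₂ f₃ (((a₂, a₃), y₁), v) := by
      intro y₁ v v' h
      have e2 : f₂ (a₂, (y₁, v.1)) ≤ f₂ (a₂, (y₁, v'.1)) := M2 le_rfl (leFst' h)
      have e3 : f₃ (a₃, v.2) ≤ f₃ (a₃, v'.2) := M3 (leSnd' h)
      exact leMk (leMk (leMk (leFst' e2) (leFst' e3)) (leFst' (leSnd' e2)))
        (leMk (leSnd' e3) (leSnd' (leSnd' e2)))
    have ht : ∀ y₁ : Y₁, ktTrace (prod23 f₂ f₃) ((a₂, a₃), y₁)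
        = (prod23 f₂ f₃ (((a₂, a₃), y₁), mA f₂ f₃ a₂ a₃ y₁)).1 := by
      intro y₁
      rw [ktTrace_eq' (prod23 f₂ f₃) ((a₂, a₃), y₁) (hmono23 y₁)]
      rfl
    -- monotonicity in the feedback argument
    have hmonoAll : Monotone fun s : X₁ × Y₁ × X₂ × Y₂ =>
        prodAll f₁ f₂ f₃ ((a₁, a₂, a₃), s) := by
      intro s s' h
      have e1 : f₁ (a₁, s.1) ≤ f₁ (a₁, s'.1) := M1 (leFst' h)
      have e2 : f₂ (a₂, (s.2.1, s.2.2.1)) ≤ f₂ (a₂, (s'.2.1, s'.2.2.1)) :=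
        M2 (leFst' (leSnd' h)) (leFst' (leSnd' (leSnd' h)))
      have e3 : f₃ (a₃, s.2.2.2) ≤ f₃ (a₃, s'.2.2.2) := M3 (leSnd' (leSnd' (leSnd' h)))
      exact leMk (leMk (leFst' e1) (leMk (leFst' e2) (leFst' e3)))
        (leMk (leFst' (leSnd' e2))
          (leMk (leSnd' e1) (leMk (leSnd' e3) (leSnd' (leSnd' e2)))))
    have hmono1T : Monotone fun u : X₁ × Y₁ =>
        prod1Tr23 f₁ f₂ f₃ ((a₁, a₂, a₃), u) := by
      intro u u' h
      have hb : mA f₂ f₃ a₂ a₃ u.2 ≤ mA f₂ f₃ a₂ a₃ u'.2 := hmmono _ _ (leSnd' h)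
      have e1 : f₁ (a₁, u.1) ≤ f₁ (a₁, u'.1) := M1 (leFst' h)
      have e2 : f₂ (a₂, (u.2, (mA f₂ f₃ a₂ a₃ u.2).1))
          ≤ f₂ (a₂, (u'.2, (mA f₂ f₃ a₂ a₃ u'.2).1)) := M2 (leSnd' h) (leFst' hb)
      have e3 : f₃ (a₃, (mA f₂ f₃ a₂ a₃ u.2).2) ≤ f₃ (a₃, (mA f₂ f₃ a₂ a₃ u'.2).2) :=
        M3 (leSnd' hb)
      simp only [prod1Tr23, ht, prod23]
      exact leMk (leMk (leFst' e1) (leMk (leFst' e2) (leFst' e3)))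
        (leMk (leFst' (leSnd' e2)) (leSnd' e1))
    -- the outer fixed point
    have hθmono : Monotone (fun u : X₁ × Y₁ =>
        ((f₂ (a₂, (u.2, (mA f₂ f₃ a₂ a₃ u.2).1))).2.1, (f₁ (a₁, u.1)).2)) := by
      intro u u' h
      have hb : mA f₂ f₃ a₂ a₃ u.2 ≤ mA f₂ f₃ a₂ a₃ u'.2 := hmmono _ _ (leSnd' h)
      have e2 : f₂ (a₂, (u.2, (mA f₂ f₃ a₂ a₃ u.2).1))
          ≤ f₂ (a₂, (u'.2, (mA f₂ f₃ a₂ a₃ u'.2).1)) := M2 (leSnd' h) (leFst' hb)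
      have e1 : f₁ (a₁, u.1) ≤ f₁ (a₁, u'.1) := M1 (leFst' h)
      exact leMk (leFst' (leSnd' e2)) (leSnd' e1)
    have hμpre : ((f₂ (a₂, ((muA f₁ f₂ f₃ a₁ a₂ a₃).2,
            (mA f₂ f₃ a₂ a₃ (muA f₁ f₂ f₃ a₁ a₂ a₃).2).1))).2.1,
          (f₁ (a₁, (muA f₁ f₂ f₃ a₁ a₂ a₃).1)).2) ≤ muA f₁ f₂ f₃ a₁ a₂ a₃ :=
      lfpAux_prefix hθmono
    -- Bekić-style identification
    have hkey : sInf {s : X₁ × Y₁ × X₂ × Y₂ |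
          (prodAll f₁ f₂ f₃ ((a₁, a₂, a₃), s)).2 ≤ s}
        = ((muA f₁ f₂ f₃ a₁ a₂ a₃).1, (muA f₁ f₂ f₃ a₁ a₂ a₃).2,
            mA f₂ f₃ a₂ a₃ (muA f₁ f₂ f₃ a₁ a₂ a₃).2) := by
      refine lfpAux_unique ?_ ?_
      · exact leMk (leFst' hμpre) (leMk (leSnd' hμpre)
          (leMk (leFst' (hmpre (muA f₁ f₂ f₃ a₁ a₂ a₃).2))
            (leSnd' (hmpre (muA f₁ f₂ f₃ a₁ a₂ a₃).2))))
      · intro s hs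
        have c1 : (f₂ (a₂, (s.2.1, s.2.2.1))).2.1 ≤ s.1 := leFst' hs
        have c2 : (f₁ (a₁, s.1)).2 ≤ s.2.1 := leFst' (leSnd' hs)
        have c3 : (f₃ (a₃, s.2.2.2)).2 ≤ s.2.2.1 := leFst' (leSnd' (leSnd' hs))
        have c4 : (f₂ (a₂, (s.2.1, s.2.2.1))).2.2 ≤ s.2.2.2 := leSnd' (leSnd' (leSnd' hs))
        have hms : mA f₂ f₃ a₂ a₃ s.2.1 ≤ s.2.2 :=
          lfpAux_le (g := fun v : X₂ × Y₂ =>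
            ((f₃ (a₃, v.2)).2, (f₂ (a₂, (s.2.1, v.1))).2.2)) (leProd c3 c4)
        have e2 : f₂ (a₂, (s.2.1, (mA f₂ f₃ a₂ a₃ s.2.1).1)) ≤ f₂ (a₂, (s.2.1, s.2.2.1)) :=
          M2 le_rfl (leFst' hms)
        have hstep : (f₂ (a₂, (s.2.1, (mA f₂ f₃ a₂ a₃ s.2.1).1))).2.1 ≤ s.1 :=
          le_trans (leFst' (leSnd' e2)) c1
        have hμs : muA f₁ f₂ f₃ a₁ a₂ a₃ ≤ (s.1, s.2.1) :=
          lfpAux_le (g := fun u : X₁ × Y₁ =>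
            ((f₂ (a₂, (u.2, (mA f₂ f₃ a₂ a₃ u.2).1))).2.1, (f₁ (a₁, u.1)).2))
            (leMk hstep c2)
        have hbs : mA f₂ f₃ a₂ a₃ (muA f₁ f₂ f₃ a₁ a₂ a₃).2 ≤ s.2.2 :=
          le_trans (hmmono _ _ (leSnd' hμs)) hms
        have k1 : (muA f₁ f₂ f₃ a₁ a₂ a₃).1 ≤ s.1 := leFst' hμs
        have k2 : (muA f₁ f₂ f₃ a₁ a₂ a₃).2 ≤ s.2.1 := leSnd' hμs
        exact leProd k1 (leProd k2 hbs)
    have hμkey : sInf {u : X₁ × Y₁ | (prod1Tr23 f₁ f₂ f₃ ((a₁, a₂, a₃), u)).2 ≤ u}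
        = muA f₁ f₂ f₃ a₁ a₂ a₃ := by
      have hset : {u : X₁ × Y₁ | (prod1Tr23 f₁ f₂ f₃ ((a₁, a₂, a₃), u)).2 ≤ u}
          = {u : X₁ × Y₁ |
              ((f₂ (a₂, (u.2, (mA f₂ f₃ a₂ a₃ u.2).1))).2.1, (f₁ (a₁, u.1)).2) ≤ u} := by
        ext u
        simp only [Set.mem_setOf_eq, prod1Tr23, ht, prod23]
      rw [hset]
      rfl
    rw [ktTrace_eq' (prodAll f₁ f₂ f₃) (a₁, a₂, a₃) hmonoAll,
      ktTrace_eq' (prod1Tr23 f₁ f₂ f₃) (a₁, a₂, a₃) hmono1T, hkey, hμkey]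
    simp only [prodAll, prod1Tr23, ht, prod23]
  · -- second conjunct
    funext i
    obtain ⟨a₁, a₂, a₃⟩ := i
    have M1 : ∀ {x x' : X₁}, x ≤ x' → f₁ (a₁, x) ≤ f₁ (a₁, x') :=
      fun h => m1 (leMk le_rfl h)
    have M2 : ∀ {y y' : Y₁} {x x' : X₂}, y ≤ y' → x ≤ x' →
        f₂ (a₂, (y, x)) ≤ f₂ (a₂, (y', x')) :=
      fun hy hx => m2 (leMk le_rfl (leMk hy hx))
    have M3 : ∀ {y y' : Y₂}, y ≤ y' → f₃ (a₃, y) ≤ f₃ (a₃, y') :=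
      fun h => m3 (leMk le_rfl h)
    -- the inner fixed point and its properties
    have hξmono : ∀ x₂ : X₂, Monotone (fun u : X₁ × Y₁ =>
        ((f₂ (a₂, (u.2, x₂))).2.1, (f₁ (a₁, u.1)).2)) := by
      intro x₂ u u' h
      have e2 : f₂ (a₂, (u.2, x₂)) ≤ f₂ (a₂, (u'.2, x₂)) := M2 (leSnd' h) le_rfl
      have e1 : f₁ (a₁, u.1) ≤ f₁ (a₁, u'.1) := M1 (leFst' h)
      exact leMk (leFst' (leSnd' e2)) (leSnd' e1)
    have hmpre : ∀ x₂ : X₂,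
        ((f₂ (a₂, ((mB f₁ f₂ a₁ a₂ x₂).2, x₂))).2.1,
          (f₁ (a₁, (mB f₁ f₂ a₁ a₂ x₂).1)).2) ≤ mB f₁ f₂ a₁ a₂ x₂ :=
      fun x₂ => lfpAux_prefix (hξmono x₂)
    have hmmono : ∀ x x' : X₂, x ≤ x' → mB f₁ f₂ a₁ a₂ x ≤ mB f₁ f₂ a₁ a₂ x' := by
      intro x x' h
      unfold mB
      refine le_sInf fun u hu => sInf_le ?_
      have e2 : f₂ (a₂, (u.2, x)) ≤ f₂ (a₂, (u.2, x')) := M2 le_rfl h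
      have step : ((f₂ (a₂, (u.2, x))).2.1, (f₁ (a₁, u.1)).2)
          ≤ ((f₂ (a₂, (u.2, x'))).2.1, (f₁ (a₁, u.1)).2) :=
        leMk (leFst' (leSnd' e2)) le_rfl
      exact le_trans step hu
    -- trace formula for prod12
    have hmono12 : ∀ x₂ : X₂, Monotone fun u : X₁ × Y₁ =>
        prod12 f₁ f₂ (((a₁, a₂), x₂), u) := by
      intro x₂ u u' h
      have e1 : f₁ (a₁, u.1) ≤ f₁ (a₁, u'.1) := M1 (leFst' h)
      have e2 : f₂ (a₂, (u.2, x₂)) ≤ f₂ (a₂, (u'.2, x₂)) := M2 (leSnd' h) le_rfl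
      exact leMk (leMk (leMk (leFst' e1) (leFst' e2)) (leSnd' (leSnd' e2)))
        (leMk (leFst' (leSnd' e2)) (leSnd' e1))
    have ht : ∀ x₂ : X₂, ktTrace (prod12 f₁ f₂) ((a₁, a₂), x₂)
        = (prod12 f₁ f₂ (((a₁, a₂), x₂), mB f₁ f₂ a₁ a₂ x₂)).1 := by
      intro x₂
      rw [ktTrace_eq' (prod12 f₁ f₂) ((a₁, a₂), x₂) (hmono12 x₂)]
      rfl
    -- monotonicity in the feedback argument
    have hmonoAll : Monotone fun s : X₁ × Y₁ × X₂ × Y₂ =>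
        prodAll f₁ f₂ f₃ ((a₁, a₂, a₃), s) := by
      intro s s' h
      have e1 : f₁ (a₁, s.1) ≤ f₁ (a₁, s'.1) := M1 (leFst' h)
      have e2 : f₂ (a₂, (s.2.1, s.2.2.1)) ≤ f₂ (a₂, (s'.2.1, s'.2.2.1)) :=
        M2 (leFst' (leSnd' h)) (leFst' (leSnd' (leSnd' h)))
      have e3 : f₃ (a₃, s.2.2.2) ≤ f₃ (a₃, s'.2.2.2) := M3 (leSnd' (leSnd' (leSnd' h)))
      exact leMk (leMk (leFst' e1) (leMk (leFst' e2) (leFst' e3)))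
        (leMk (leFst' (leSnd' e2))
          (leMk (leSnd' e1) (leMk (leSnd' e3) (leSnd' (leSnd' e2)))))
    have hmonoT3 : Monotone fun w : X₂ × Y₂ =>
        prodTr12Then3 f₁ f₂ f₃ ((a₁, a₂, a₃), w) := by
      intro w w' h
      have hb : mB f₁ f₂ a₁ a₂ w.1 ≤ mB f₁ f₂ a₁ a₂ w'.1 := hmmono _ _ (leFst' h)
      have e1 : f₁ (a₁, (mB f₁ f₂ a₁ a₂ w.1).1) ≤ f₁ (a₁, (mB f₁ f₂ a₁ a₂ w'.1).1) :=
        M1 (leFst' hb)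
      have e2 : f₂ (a₂, ((mB f₁ f₂ a₁ a₂ w.1).2, w.1))
          ≤ f₂ (a₂, ((mB f₁ f₂ a₁ a₂ w'.1).2, w'.1)) := M2 (leSnd' hb) (leFst' h)
      have e3 : f₃ (a₃, w.2) ≤ f₃ (a₃, w'.2) := M3 (leSnd' h)
      simp only [prodTr12Then3, ht, prod12]
      exact leMk (leMk (leFst' e1) (leMk (leFst' e2) (leFst' e3)))
        (leMk (leSnd' e3) (leSnd' (leSnd' e2)))
    -- the outer fixed point
    have hLmono : Monotone (fun w : X₂ × Y₂ =>
        ((f₃ (a₃, w.2)).2, (f₂ (a₂, ((mB f₁ f₂ a₁ a₂ w.1).2, w.1))).2.2)) := by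
      intro w w' h
      have hb : mB f₁ f₂ a₁ a₂ w.1 ≤ mB f₁ f₂ a₁ a₂ w'.1 := hmmono _ _ (leFst' h)
      have e2 : f₂ (a₂, ((mB f₁ f₂ a₁ a₂ w.1).2, w.1))
          ≤ f₂ (a₂, ((mB f₁ f₂ a₁ a₂ w'.1).2, w'.1)) := M2 (leSnd' hb) (leFst' h)
      have e3 : f₃ (a₃, w.2) ≤ f₃ (a₃, w'.2) := M3 (leSnd' h)
      exact leMk (leSnd' e3) (leSnd' (leSnd' e2))
    have hμpre : ((f₃ (a₃, (muB f₁ f₂ f₃ a₁ a₂ a₃).2)).2,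
          (f₂ (a₂, ((mB f₁ f₂ a₁ a₂ (muB f₁ f₂ f₃ a₁ a₂ a₃).1).2,
            (muB f₁ f₂ f₃ a₁ a₂ a₃).1))).2.2) ≤ muB f₁ f₂ f₃ a₁ a₂ a₃ :=
      lfpAux_prefix hLmono
    -- Bekić-style identification
    have hkey : sInf {s : X₁ × Y₁ × X₂ × Y₂ |
          (prodAll f₁ f₂ f₃ ((a₁, a₂, a₃), s)).2 ≤ s}
        = ((mB f₁ f₂ a₁ a₂ (muB f₁ f₂ f₃ a₁ a₂ a₃).1).1,
            (mB f₁ f₂ a₁ a₂ (muB f₁ f₂ f₃ a₁ a₂ a₃).1).2,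
            (muB f₁ f₂ f₃ a₁ a₂ a₃).1, (muB f₁ f₂ f₃ a₁ a₂ a₃).2) := by
      refine lfpAux_unique ?_ ?_
      · exact leMk (leFst' (hmpre (muB f₁ f₂ f₃ a₁ a₂ a₃).1))
          (leMk (leSnd' (hmpre (muB f₁ f₂ f₃ a₁ a₂ a₃).1))
            (leMk (leFst' hμpre) (leSnd' hμpre)))
      · intro s hs
        have c1 : (f₂ (a₂, (s.2.1, s.2.2.1))).2.1 ≤ s.1 := leFst' hs
        have c2 : (f₁ (a₁, s.1)).2 ≤ s.2.1 := leFst' (leSnd' hs)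
        have c3 : (f₃ (a₃, s.2.2.2)).2 ≤ s.2.2.1 := leFst' (leSnd' (leSnd' hs))
        have c4 : (f₂ (a₂, (s.2.1, s.2.2.1))).2.2 ≤ s.2.2.2 := leSnd' (leSnd' (leSnd' hs))
        have hms : mB f₁ f₂ a₁ a₂ s.2.2.1 ≤ (s.1, s.2.1) :=
          lfpAux_le (g := fun u : X₁ × Y₁ =>
            ((f₂ (a₂, (u.2, s.2.2.1))).2.1, (f₁ (a₁, u.1)).2)) (leMk c1 c2)
        have e2 : f₂ (a₂, ((mB f₁ f₂ a₁ a₂ s.2.2.1).2, s.2.2.1))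
            ≤ f₂ (a₂, (s.2.1, s.2.2.1)) := M2 (leSnd' hms) le_rfl
        have hstep : (f₂ (a₂, ((mB f₁ f₂ a₁ a₂ s.2.2.1).2, s.2.2.1))).2.2 ≤ s.2.2.2 :=
          le_trans (leSnd' (leSnd' e2)) c4
        have hμs : muB f₁ f₂ f₃ a₁ a₂ a₃ ≤ (s.2.2.1, s.2.2.2) :=
          lfpAux_le (g := fun w : X₂ × Y₂ =>
            ((f₃ (a₃, w.2)).2, (f₂ (a₂, ((mB f₁ f₂ a₁ a₂ w.1).2, w.1))).2.2))
            (leMk c3 hstep)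
        have hbs : mB f₁ f₂ a₁ a₂ (muB f₁ f₂ f₃ a₁ a₂ a₃).1 ≤ (s.1, s.2.1) :=
          le_trans (hmmono _ _ (leFst' hμs)) hms
        have k1 : (mB f₁ f₂ a₁ a₂ (muB f₁ f₂ f₃ a₁ a₂ a₃).1).1 ≤ s.1 := leFst' hbs
        have k2 : (mB f₁ f₂ a₁ a₂ (muB f₁ f₂ f₃ a₁ a₂ a₃).1).2 ≤ s.2.1 := leSnd' hbs
        have k3 : (muB f₁ f₂ f₃ a₁ a₂ a₃).1 ≤ s.2.2.1 := leFst' hμs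
        have k4 : (muB f₁ f₂ f₃ a₁ a₂ a₃).2 ≤ s.2.2.2 := leSnd' hμs
        exact leProd k1 (leProd k2 (leProd k3 k4))
    have hμkey : sInf {w : X₂ × Y₂ | (prodTr12Then3 f₁ f₂ f₃ ((a₁, a₂, a₃), w)).2 ≤ w}
        = muB f₁ f₂ f₃ a₁ a₂ a₃ := by
      have hset : {w : X₂ × Y₂ | (prodTr12Then3 f₁ f₂ f₃ ((a₁, a₂, a₃), w)).2 ≤ w}
          = {w : X₂ × Y₂ |
              ((f₃ (a₃, w.2)).2,
                (f₂ (a₂, ((mB f₁ f₂ a₁ a₂ w.1).2, w.1))).2.2) ≤ w} := by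
        ext w
        simp only [Set.mem_setOf_eq, prodTr12Then3, ht, prod12]
      rw [hset]
      rfl
    rw [ktTrace_eq' (prodAll f₁ f₂ f₃) (a₁, a₂, a₃) hmonoAll,
      ktTrace_eq' (prodTr12Then3 f₁ f₂ f₃) (a₁, a₂, a₃) hmonoT3, hkey, hμkey]
    simp only [prodAll, prodTr12Then3, ht, prod12]


end Assoc
end
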